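/- The worst-case inclusion probability bound π_i ≥ 1 − (1 − n_i/n_tot)^m for Unbiased Space Saving is tight: if m divides both n_i and n_tot, then for the sequence consisting of n_tot − n_i pairwise distinct items (each different from i) followed by n_i consecutive copies of item i, the probability that item i is a label of the sketch at the end is exactly 1 − (1 − n_i/n_tot)^m. -/

import Mathlib

/-!
While item `i` is not a label, every arriving item is new to the sketch and goes to a bin of
minimal count, so the counts stay balanced: they sum to the number `t` of rows read and differ by
at most one, which makes the minimal count `t / m`. Write `ntot - ni = m * a` and `ni = m * b`.
After the `m * a` distinct items no label is `i`; the copy of `i` arriving at row `r` then takes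
over a bin iff `U r < 1 / (r / m + 1)`, and once `i` is a label it stays one. By independence,
`i` is missed with probability `∏ q ∈ [a, a + b), (q / (q + 1)) ^ m = (a / (a + b)) ^ m`.
-/

open MeasureTheory ProbabilityTheory Filter

/-- The state of a Space Saving sketch with `m` bins: each bin holds an
optional label (`none` = no label yet) and a count. -/
abbrev SSState (m : ℕ) := Fin m → Option ℕ × ℕ

/-- Initial state: all bins unlabeled with count 0. -/
def initState (m : ℕ) : SSState m := fun _ => (none, 0)

/-- The minimal bin count `N̂_min` (0 when `m = 0`). -/
noncomputable def minCount {m : ℕ} (s : SSState m) : ℕ := ⨅ j, (s j).2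

/-- The maximal bin count `N̂_max` (0 when `m = 0`). -/
noncomputable def maxCount {m : ℕ} (s : SSState m) : ℕ := ⨆ j, (s j).2

/-- Select a bin of minimal count using the tie-breaking randomness `v`:
among the `k` bins of minimal count (sorted by index), the one of rank
`⌊v * k⌋` (clamped) is chosen; this is a uniformly random choice among the
tied bins when `v` is uniform on `[0,1)`.  Returns `none` iff `m = 0`. -/
noncomputable def pickMin {m : ℕ} (s : SSState m) (v : ℝ) : Option (Fin m) :=
  let l := (Finset.univ.filter fun j => ∀ k, (s j).2 ≤ (s k).2).sort (· ≤ ·)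
  l[min (⌊v * l.length⌋.toNat) (l.length - 1)]?

/-- One step of the (Unbiased) Space Saving update upon arrival of item `x`,
with label-replacement randomness `u` and tie-breaking randomness `v`.
If `x` is a label of the sketch, its bin's count is incremented; otherwise a
minimal bin (count `N̂_min`) is selected, its count is incremented, and its
label is replaced by `x` iff `u < 1/(N̂_min + 1)` (so a uniform `u` on `[0,1)`
replaces the label with probability `1/(N̂_min+1)`; taking `u = 0` makes the
replacement always happen, which is the Deterministic Space Saving update). -/
noncomputable def ssUpdate {m : ℕ} (x : ℕ) (u v : ℝ) (s : SSState m) : SSState m :=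
  if ∃ j, (s j).1 = some x then
    fun j => if (s j).1 = some x then (some x, (s j).2 + 1) else s j
  else
    match pickMin s v with
    | none => s
    | some j₀ =>
        Function.update s j₀
          ((if u < 1 / (((s j₀).2 : ℝ) + 1) then some x else (s j₀).1), (s j₀).2 + 1)

/-- The sketch state after `t` stream elements, where the `r`-th element
(0-indexed) is `x r`, with randomness sequences `u` (label replacement)
and `v` (tie breaking). -/
noncomputable def ssRun (m : ℕ) (x : ℕ → ℕ) (u v : ℕ → ℝ) : ℕ → SSState m
  | 0 => initState m
  | t + 1 => ssUpdate (x t) (u t) (v t) (ssRun m x u v t)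

/-- Estimated count `N̂_i` of item `i`: the count of the bin labeled `i`,
or `0` if no bin is labeled `i`. -/
def ssEst {m : ℕ} (s : SSState m) (i : ℕ) : ℕ :=
  ∑ j, if (s j).1 = some i then (s j).2 else 0

/-- `Z_i = 1`: item `i` is one of the labels of the sketch. -/
def isLabel {m : ℕ} (s : SSState m) (i : ℕ) : Prop := ∃ j, (s j).1 = some i

/-- True count `n_i(t)` of item `i` among the first `t` stream elements. -/
def trueCount (x : ℕ → ℕ) (i t : ℕ) : ℕ :=
  ((Finset.range t).filter fun r => x r = i).card

/-- The uniform distribution on `[0,1)`. -/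
noncomputable def unif01 : Measure ℝ := volume.restrict (Set.Ico (0:ℝ) 1)

/-- The law on `ℕ` of a discrete item distribution with probabilities `p`. -/
noncomputable def itemLaw (p : ℕ → ℝ) : Measure ℕ :=
  Measure.sum fun i => ENNReal.ofReal (p i) • Measure.dirac i

open Finset

def IsBalanced {m : ℕ} (s : SSState m) (t : ℕ) : Prop :=
  ∑ j, (s j).2 = t ∧ ∀ j k, (s j).2 ≤ (s k).2 + 1

lemma isBalanced_initState (m : ℕ) : IsBalanced (initState m) 0 := by
  simp [IsBalanced, initState]

namespace IsBalanced

variable {m t : ℕ} {s : SSState m} {j : Fin m}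

lemma count_eq_div (h : IsBalanced s t) (hj : ∀ k, (s j).2 ≤ (s k).2) : (s j).2 = t / m := by
  have hlo : (s j).2 * m ≤ t := by
    simpa [← h.1, mul_comm] using card_nsmul_le_sum univ (fun k => (s k).2) (s j).2 fun k _ => hj k
  have hhi : t < ((s j).2 + 1) * m := by
    calc t = ∑ k, (s k).2 := h.1.symm
      _ < ∑ _k : Fin m, ((s j).2 + 1) :=
        sum_lt_sum (fun k _ => h.2 k j) ⟨j, mem_univ j, lt_add_one _⟩
      _ = ((s j).2 + 1) * m := by simp [mul_comm]
  exact (Nat.div_eq_of_lt_le hlo hhi).symm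

lemma update (h : IsBalanced s t) (hj : ∀ k, (s j).2 ≤ (s k).2) (lab : Option ℕ) :
    IsBalanced (Function.update s j (lab, (s j).2 + 1)) (t + 1) := by
  refine ⟨?_, fun k l => ?_⟩
  · have hcount : ∀ k, (Function.update s j (lab, (s j).2 + 1) k).2
        = (s k).2 + if k = j then 1 else 0 := fun k => by
      by_cases hk : k = j <;> simp [hk]
    simp only [hcount, sum_add_distrib, sum_ite_eq', mem_univ, if_true, h.1]
  · have := h.2 k l
    have := h.2 k j
    have := hj l
    simp only [Function.update_apply]
    split_ifs <;> subst_vars <;> omega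

end IsBalanced

section Update

variable {m : ℕ} {s : SSState m}

lemma pickMin_isMin {v : ℝ} {j : Fin m} (h : pickMin s v = some j) : ∀ k, (s j).2 ≤ (s k).2 := by
  have hmem := List.mem_of_getElem? h
  rw [mem_sort, mem_filter] at hmem
  exact hmem.2

lemma exists_pickMin_eq_some (hm : 0 < m) (s : SSState m) (v : ℝ) : ∃ j, pickMin s v = some j := by
  obtain ⟨j, -, hj⟩ := univ.exists_min_image (fun j => (s j).2) ⟨⟨0, hm⟩, mem_univ _⟩
  have hpos : 0 < (univ.filter fun j => ∀ k, (s j).2 ≤ (s k).2).card :=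
    card_pos.2 ⟨j, by simpa using hj⟩
  simp only [pickMin]
  exact ⟨_, List.getElem?_eq_getElem (by rw [length_sort]; omega)⟩

lemma ssUpdate_of_not_isLabel {y : ℕ} (u : ℝ) {v : ℝ} {j : Fin m} (hy : ¬ isLabel s y)
    (hj : pickMin s v = some j) :
    ssUpdate y u v s = Function.update s j
      ((if u < 1 / (((s j).2 : ℝ) + 1) then some y else (s j).1), (s j).2 + 1) := by
  rw [ssUpdate, if_neg (show ¬ ∃ j, (s j).1 = some y from hy), hj]

lemma isLabel_ssUpdate_self {y : ℕ} (u v : ℝ) (h : isLabel s y) : isLabel (ssUpdate y u v s) y := by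
  obtain ⟨j, hj⟩ := h
  rw [ssUpdate, if_pos ⟨j, hj⟩]
  exact ⟨j, by simp [hj]⟩

lemma isLabel_of_isLabel_ssUpdate {y z : ℕ} {u v : ℝ} (h : isLabel (ssUpdate y u v s) z)
    (hz : z ≠ y) : isLabel s z := by
  obtain ⟨j, hj⟩ := h
  by_cases hy : isLabel s y
  · obtain ⟨k, hk⟩ := hy
    rw [ssUpdate, if_pos ⟨k, hk⟩] at hj
    refine ⟨j, ?_⟩
    split_ifs at hj <;> simp_all
  · obtain ⟨k, hk⟩ := exists_pickMin_eq_some (Fin.pos j) s v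
    rw [ssUpdate_of_not_isLabel u hy hk] at hj
    refine ⟨j, ?_⟩
    rcases eq_or_ne j k with rfl | hjk
    · split_ifs at hj <;> simp_all
    · simpa [hjk] using hj

variable {t : ℕ}

lemma isBalanced_ssUpdate (hm : 0 < m) (h : IsBalanced s t) {y : ℕ} (hy : ¬ isLabel s y)
    (u v : ℝ) : IsBalanced (ssUpdate y u v s) (t + 1) := by
  obtain ⟨j, hj⟩ := exists_pickMin_eq_some hm s v
  rw [ssUpdate_of_not_isLabel u hy hj]
  exact h.update (pickMin_isMin hj) _

lemma isLabel_ssUpdate_self_iff (hm : 0 < m) (h : IsBalanced s t) {y : ℕ}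
    (hy : ¬ isLabel s y) (u v : ℝ) :
    isLabel (ssUpdate y u v s) y ↔ u < 1 / (((t / m : ℕ) : ℝ) + 1) := by
  obtain ⟨j, hj⟩ := exists_pickMin_eq_some hm s v
  rw [ssUpdate_of_not_isLabel u hy hj, ← h.count_eq_div (pickMin_isMin hj)]
  constructor
  · rintro ⟨k, hk⟩
    rcases eq_or_ne k j with rfl | hkj
    · by_contra hu
      simp only [Function.update_self, if_neg hu] at hk
      exact hy ⟨k, hk⟩
    · exact absurd ⟨k, by simpa [hkj] using hk⟩ hy
  · intro hu
    exact ⟨j, by simp only [Function.update_self, if_pos hu]⟩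

end Update

section Run

variable {m : ℕ} {x : ℕ → ℕ} {u v : ℕ → ℝ}

lemma exists_lt_of_isLabel_ssRun {t y : ℕ} (h : isLabel (ssRun m x u v t) y) :
    ∃ r < t, x r = y := by
  induction t with
  | zero =>
    obtain ⟨j, hj⟩ := h
    simp [ssRun, initState] at hj
  | succ t ih =>
    by_cases hy : y = x t
    · exact ⟨t, lt_add_one t, hy.symm⟩
    · obtain ⟨r, hr, hxr⟩ := ih (isLabel_of_isLabel_ssUpdate h hy)
      exact ⟨r, by omega, hxr⟩

lemma isBalanced_ssRun_of_injOn (hm : 0 < m) {t : ℕ} (hx : Set.InjOn x (Set.Iio t)) :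
    IsBalanced (ssRun m x u v t) t := by
  induction t with
  | zero => exact isBalanced_initState m
  | succ t ih =>
    refine isBalanced_ssUpdate hm (ih (hx.mono (Set.Iio_subset_Iio (by omega)))) (fun h => ?_) _ _
    obtain ⟨r, hr, hxr⟩ := exists_lt_of_isLabel_ssRun h
    exact hr.ne (hx (Set.mem_Iio.2 (by omega)) (Set.mem_Iio.2 (lt_add_one t)) hxr)

variable {t i : ℕ}

lemma isBalanced_ssRun_add_of_not_isLabel (hm : 0 < m) (hbal : IsBalanced (ssRun m x u v t) t)
    {n : ℕ} (hx : ∀ r ∈ Ico t (t + n), x r = i) (hi : ¬ isLabel (ssRun m x u v (t + n)) i) :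
    IsBalanced (ssRun m x u v (t + n)) (t + n) := by
  induction n with
  | zero => exact hbal
  | succ n ih =>
    have hxn : x (t + n) = i := hx _ (by simp)
    rw [← add_assoc, ssRun.eq_2, hxn] at hi ⊢
    have hi' : ¬ isLabel (ssRun m x u v (t + n)) i := fun h => hi (isLabel_ssUpdate_self _ _ h)
    exact isBalanced_ssUpdate hm (ih (fun r hr => hx r (by simp at hr ⊢; omega)) hi') hi' _ _

lemma isLabel_ssRun_add_iff (hm : 0 < m) (hbal : IsBalanced (ssRun m x u v t) t)
    (hi : ¬ isLabel (ssRun m x u v t) i) {n : ℕ} (hx : ∀ r ∈ Ico t (t + n), x r = i) :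
    isLabel (ssRun m x u v (t + n)) i ↔ ∃ r ∈ Ico t (t + n), u r < 1 / (((r / m : ℕ) : ℝ) + 1) := by
  induction n with
  | zero => simpa using hi
  | succ n ih =>
    have hxn : x (t + n) = i := hx _ (by simp)
    rw [← add_assoc, Nat.Ico_succ_right_eq_insert_Ico (by omega), exists_mem_insert]
    rw [← add_assoc] at hx
    have ih := ih fun r hr => hx r (by simp at hr ⊢; omega)
    rw [ssRun.eq_2, hxn]
    by_cases hL : isLabel (ssRun m x u v (t + n)) i
    · exact iff_of_true (isLabel_ssUpdate_self _ _ hL) (Or.inr (ih.1 hL))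
    · rw [isLabel_ssUpdate_self_iff hm (isBalanced_ssRun_add_of_not_isLabel hm hbal
        (fun r hr => hx r (by simp at hr ⊢; omega)) hL) hL, ← ih, or_iff_left hL]

end Run

instance : IsProbabilityMeasure unif01 :=
  ⟨by simp [unif01]⟩

lemma unif01_Ici {c : ℝ} (hc : 0 ≤ c) : unif01 (Set.Ici c) = ENNReal.ofReal (1 - c) := by
  have hinter : Set.Ici c ∩ Set.Ico 0 1 = Set.Ico c 1 := by
    ext y
    simp only [Set.mem_inter_iff, Set.mem_Ici, Set.mem_Ico]
    grind
  rw [unif01, Measure.restrict_apply measurableSet_Ici, hinter, Real.volume_Ico]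

lemma measureReal_exists_lt_eq_one_sub_prod {ι Ω : Type*} [MeasurableSpace Ω] {P : Measure Ω}
    [IsProbabilityMeasure P] {U : ι → Ω → ℝ} (hU : ∀ r, Measurable (U r))
    (hindep : iIndepFun U P) (hlaw : ∀ r, P.map (U r) = unif01) (S : Finset ι) {c : ι → ℝ}
    (hc : ∀ r ∈ S, c r ∈ Set.Icc 0 1) :
    P.real {ω | ∃ r ∈ S, U r ω < c r} = 1 - ∏ r ∈ S, (1 - c r) := by
  have hevent : {ω | ∃ r ∈ S, U r ω < c r} = (⋂ r ∈ S, U r ⁻¹' Set.Ici (c r))ᶜ := by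
    ext ω
    simp
  rw [hevent, probReal_compl_eq_one_sub (S.measurableSet_biInter fun r _ =>
    hU r measurableSet_Ici), measureReal_def,
    hindep.measure_inter_preimage_eq_mul S fun r _ => measurableSet_Ici, ENNReal.toReal_prod]
  congr 1
  refine prod_congr rfl fun r hr => ?_
  rw [← Measure.map_apply (hU r) measurableSet_Ici, hlaw, unif01_Ici (hc r hr).1,
    ENNReal.toReal_ofReal (by linarith [(hc r hr).2])]

lemma prod_range_mul_div {M : Type*} [CommMonoid M] (f : ℕ → M) (m n : ℕ) :
    ∏ r ∈ range (m * n), f (r / m) = ∏ q ∈ range n, f q ^ m := by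
  induction n with
  | zero => simp
  | succ n ih =>
    rw [Nat.mul_succ, prod_range_add, ih, prod_range_succ]
    have hblock : ∀ k ∈ range m, f ((m * n + k) / m) = f n := fun k hk => by
      have hkm := mem_range.1 hk
      rw [Nat.mul_add_div (by omega), Nat.div_eq_of_lt hkm, add_zero]
    rw [prod_congr rfl hblock, prod_const, card_range]

lemma prod_range_one_sub_inv (a b : ℕ) :
    ∏ q ∈ range b, (1 - 1 / ((a : ℝ) + q + 1)) = 1 - b / (a + b) := by
  induction b with
  | zero => simp
  | succ b ih =>
    rw [prod_range_succ, ih]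
    rcases Nat.eq_zero_or_pos (a + b) with hab | hab
    · obtain ⟨rfl, rfl⟩ : a = 0 ∧ b = 0 := by omega
      norm_num
    · have : (0 : ℝ) < a + b := by exact_mod_cast hab
      push_cast
      field_simp
      ring

lemma prod_Ico_one_sub_inv_div {m : ℕ} (hm : 0 < m) (a b : ℕ) :
    ∏ r ∈ Ico (m * a) (m * a + m * b), (1 - 1 / (((r / m : ℕ) : ℝ) + 1))
      = (1 - b / (a + b)) ^ m := by
  have hdiv : ∀ k, (m * a + k) / m = a + k / m := fun k => Nat.mul_add_div hm a k
  rw [prod_Ico_eq_prod_range, Nat.add_sub_cancel_left]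
  simp_rw [hdiv]
  rw [prod_range_mul_div (fun q => 1 - 1 / (((a + q : ℕ) : ℝ) + 1)), prod_pow]
  push_cast
  rw [prod_range_one_sub_inv]

theorem worst_case_inclusion_probability_tight_general
    {Ω : Type*} [MeasurableSpace Ω] (P : Measure Ω) [IsProbabilityMeasure P]
    (m : ℕ) (hm : 0 < m)
    (U V : ℕ → Ω → ℝ)
    (hmeas : ∀ t, Measurable fun ω => (U t ω, V t ω))
    (hindep : iIndepFun (fun t ω => (U t ω, V t ω)) P)
    (hlaw : ∀ t, Measure.map (fun ω => (U t ω, V t ω)) P = unif01.prod unif01)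
    (i ni ntot : ℕ) (hni : ni ≤ ntot)
    (hdvd1 : m ∣ ni) (hdvd2 : m ∣ ntot)
    (x : ℕ → ℕ)
    (hne : ∀ r, r < ntot - ni → x r ≠ i)
    (hdistinct : ∀ r r', r < ntot - ni → r' < ntot - ni → r ≠ r' → x r ≠ x r')
    (hlast : ∀ r, ntot - ni ≤ r → r < ntot → x r = i) :
    (P {ω | isLabel (ssRun m x (fun r => U r ω) (fun r => V r ω) ntot) i}).toReal
      = 1 - (1 - (ni : ℝ) / ntot) ^ m := by
  obtain ⟨b, rfl⟩ := hdvd1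
  obtain ⟨a, ha⟩ : m ∣ ntot - m * b := Nat.dvd_sub hdvd2 (dvd_mul_right m b)
  obtain rfl : ntot = m * a + m * b := by omega
  rw [ha] at hne hdistinct hlast
  have hevent : {ω | isLabel (ssRun m x (fun r => U r ω) (fun r => V r ω) (m * a + m * b)) i}
      = {ω | ∃ r ∈ Ico (m * a) (m * a + m * b), U r ω < 1 / (((r / m : ℕ) : ℝ) + 1)} := by
    ext ω
    refine isLabel_ssRun_add_iff hm (isBalanced_ssRun_of_injOn hm fun r hr r' hr' hxr => ?_)
      (fun h => ?_) fun r hr => hlast r (mem_Ico.1 hr).1 (mem_Ico.1 hr).2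
    · by_contra hrr'
      exact hdistinct r r' hr hr' hrr' hxr
    · obtain ⟨r, hr, hxr⟩ := exists_lt_of_isLabel_ssRun h
      exact hne r hr hxr
  have hindepU : iIndepFun U P := hindep.comp (fun _ => Prod.fst) fun _ => measurable_fst
  have hlawU (r : ℕ) : P.map (U r) = unif01 := by
    rw [← Measure.fst_map_prodMk (hmeas r).snd, hlaw, Measure.fst_prod]
  rw [← measureReal_def, hevent, measureReal_exists_lt_eq_one_sub_prod (fun r => (hmeas r).fst)
    hindepU hlawU _ fun r _ => ⟨by positivity, div_le_one_of_le₀ (by simp) (by positivity)⟩,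
    prod_Ico_one_sub_inv_div hm]
  push_cast
  rw [← mul_add, mul_div_mul_left _ _ (by exact_mod_cast hm.ne')]

/-- tightness of the worst-case inclusion bound.  Suppose
`m` divides both `ni` and `ntot`, and the input sequence consists of
`ntot − ni` pairwise distinct items (all different from `i`) followed by `ni`
consecutive copies of item `i`.  Then the probability that item `i` is a label
of the Unbiased Space Saving sketch after the `ntot` rows is exactly
`1 − (1 − ni/ntot)^m`. -/
theorem worst_case_inclusion_probability_tight
    {Ω : Type*} [MeasurableSpace Ω] (P : Measure Ω) [IsProbabilityMeasure P]
    (m : ℕ) (hm : 0 < m)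
    (U V : ℕ → Ω → ℝ)
    (hmeas : ∀ t, Measurable fun ω => (U t ω, V t ω))
    (hindep : iIndepFun (fun t ω => (U t ω, V t ω)) P)
    (hlaw : ∀ t, Measure.map (fun ω => (U t ω, V t ω)) P = unif01.prod unif01)
    (i ni ntot : ℕ) (hni : ni ≤ ntot) (hntot : 0 < ntot)
    (hdvd1 : m ∣ ni) (hdvd2 : m ∣ ntot)
    (x : ℕ → ℕ)
    (hne : ∀ r, r < ntot - ni → x r ≠ i)
    (hdistinct : ∀ r r', r < ntot - ni → r' < ntot - ni → r ≠ r' → x r ≠ x r')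
    (hlast : ∀ r, ntot - ni ≤ r → r < ntot → x r = i) :
    (P {ω | isLabel (ssRun m x (fun r => U r ω) (fun r => V r ω) ntot) i}).toReal
      = 1 - (1 - (ni : ℝ) / ntot) ^ m :=
  worst_case_inclusion_probability_tight_general P m hm U V hmeas hindep hlaw i ni ntot hni hdvd1
    hdvd2 x hne hdistinct hlast
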